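/- In the space H_2 = span{φ_0, φ_1, φ_2}, a function f with f(0) = 0, f̂(ω_0) = 0, f̂(ω_1) = 0 for distinct real ω_0 ≠ ω_1 must be zero unless ω_0 ω_1 = −1. Equivalently, ({0}, {ω_0, ω_1}) is a uniqueness pair for H_2 if and only if ω_0 ω_1 ≠ −1. -/
import Mathlib

/-- `φ_0(x) = π^{-1/4} e^{-x²/2}`. -/
noncomputable def phi0 (x : ℝ) : ℝ :=
  Real.pi ^ (-(1 : ℝ)/4) * Real.exp (-x ^ 2 / 2)

/-- `φ_1(x) = π^{-1/4} √2 x e^{-x²/2}`. -/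
noncomputable def phi1 (x : ℝ) : ℝ :=
  Real.pi ^ (-(1 : ℝ)/4) * Real.sqrt 2 * x * Real.exp (-x ^ 2 / 2)

/-- `φ_2(x) = π^{-1/4} 2^{-1/2} (2x² − 1) e^{-x²/2}`. -/
noncomputable def phi2 (x : ℝ) : ℝ :=
  Real.pi ^ (-(1 : ℝ)/4) * (Real.sqrt 2)⁻¹ * (2 * x ^ 2 - 1) * Real.exp (-x ^ 2 / 2)

lemma sqrt2_sq_c : ((Real.sqrt 2 : ℝ) : ℂ) ^ 2 = 2 := by
  norm_cast; rw [Real.sq_sqrt]; norm_num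

lemma sqrt2_ne_c : ((Real.sqrt 2 : ℝ) : ℂ) ≠ 0 :=
  Complex.ofReal_ne_zero.mpr (by positivity)

lemma sqrt2_inv_c : ((Real.sqrt 2 : ℝ) : ℂ)⁻¹ = ((Real.sqrt 2 : ℝ) : ℂ) / 2 := by
  have hm : ((Real.sqrt 2 : ℝ) : ℂ) * (((Real.sqrt 2 : ℝ) : ℂ) / 2) = 1 := by
    linear_combination sqrt2_sq_c / 2
  exact inv_eq_of_mul_eq_one_right hm

lemma pi4_ne_c : ((Real.pi ^ (-(1 : ℝ)/4) : ℝ) : ℂ) ≠ 0 :=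
  Complex.ofReal_ne_zero.mpr (ne_of_gt (Real.rpow_pos_of_pos Real.pi_pos _))

/-- Normalized Fourier-side equation. -/
lemma keyω (a0 a1 a2 : ℂ) (ω : ℝ)
    (h : a0 * phi0 ω - Complex.I * a1 * phi1 ω - a2 * phi2 ω = 0) :
    a0 * (Real.sqrt 2 : ℝ) - 2 * Complex.I * a1 * (ω:ℂ) - a2 * (2 * (ω:ℂ)^2 - 1) = 0 := by
  have hE : Complex.exp (-(ω:ℂ) ^ 2 / 2) ≠ 0 := Complex.exp_ne_zero _
  unfold phi0 phi1 phi2 at h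
  push_cast at h
  rw [sqrt2_inv_c] at h
  have h2 : (((Real.pi ^ (-(1 : ℝ)/4) : ℝ) : ℂ) * Complex.exp (-(ω:ℂ) ^ 2 / 2)) *
      (a0 * (Real.sqrt 2 : ℝ) - 2 * Complex.I * a1 * (ω:ℂ) - a2 * (2 * (ω:ℂ)^2 - 1)) = 0 := by
    linear_combination ((Real.sqrt 2 : ℝ) : ℂ) * h +
      (Complex.I * a1 * (ω:ℂ) * ((Real.pi ^ (-(1 : ℝ)/4) : ℝ) : ℂ) * Complex.exp (-(ω:ℂ) ^ 2 / 2)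
        + a2 * ((Real.pi ^ (-(1 : ℝ)/4) : ℝ) : ℂ) * (2*(ω:ℂ)^2-1) * Complex.exp (-(ω:ℂ) ^ 2 / 2) / 2) * sqrt2_sq_c
  rcases mul_eq_zero.mp h2 with h3 | h3
  · exact absurd h3 (mul_ne_zero pi4_ne_c hE)
  · exact h3

/-- Normalized time-side equation at 0. -/
lemma key0 (a0 a1 a2 : ℂ)
    (h : a0 * phi0 0 + a1 * phi1 0 + a2 * phi2 0 = 0) :
    a0 * (Real.sqrt 2 : ℝ) - a2 = 0 := by
  unfold phi0 phi1 phi2 at h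
  push_cast at h
  rw [sqrt2_inv_c] at h
  have h2 : (((Real.pi ^ (-(1 : ℝ)/4) : ℝ) : ℂ) * Complex.exp (-(0:ℂ) ^ 2 / 2)) *
      (a0 * (Real.sqrt 2 : ℝ) - a2) = 0 := by
    linear_combination ((Real.sqrt 2 : ℝ) : ℂ) * h +
      (a2 * ((Real.pi ^ (-(1 : ℝ)/4) : ℝ) : ℂ) * Complex.exp (-(0:ℂ) ^ 2 / 2) / 2) * sqrt2_sq_c
  rcases mul_eq_zero.mp h2 with h3 | h3
  · exact absurd h3 (mul_ne_zero pi4_ne_c (Complex.exp_ne_zero _))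
  · exact h3

/-- For `f = a_0 φ_0 + a_1 φ_1 + a_2 φ_2 ∈ H_2`, with `f̂ = a_0 φ_0 − i a_1 φ_1 − a_2 φ_2`
(since `F[φ_n] = (−i)^n φ_n`): the conditions `f(0) = 0`, `f̂(ω_0) = 0`, `f̂(ω_1) = 0`
for distinct `ω_0 ≠ ω_1` force `f = 0` if and only if `ω_0 ω_1 ≠ −1`; i.e.
`({0}, {ω_0, ω_1})` is a uniqueness pair for `H_2` iff `ω_0 ω_1 ≠ −1`. -/
theorem stmt_5 (ω0 ω1 : ℝ) (hω : ω0 ≠ ω1) :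
    (∀ a0 a1 a2 : ℂ,
        a0 * phi0 0 + a1 * phi1 0 + a2 * phi2 0 = 0 →
        a0 * phi0 ω0 - Complex.I * a1 * phi1 ω0 - a2 * phi2 ω0 = 0 →
        a0 * phi0 ω1 - Complex.I * a1 * phi1 ω1 - a2 * phi2 ω1 = 0 →
        a0 = 0 ∧ a1 = 0 ∧ a2 = 0)
      ↔ ω0 * ω1 ≠ -1 := by
  constructor
  · intro H
    intro hp
    have hpc : (ω0 : ℂ) * (ω1 : ℂ) = -1 := by exact_mod_cast hp
    have hω0 : (ω0 : ℝ) ≠ 0 := by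
      intro h; rw [h] at hp; norm_num at hp
    -- plug in the nontrivial solution
    have := H ((ω0:ℂ) * (Real.sqrt 2 : ℝ) / 2) (-Complex.I * (1 - (ω0:ℂ)^2)) (ω0:ℂ)
      (by
        unfold phi0 phi1 phi2
        push_cast
        rw [sqrt2_inv_c]
        norm_num
        ring)
      (by
        unfold phi0 phi1 phi2
        push_cast
        rw [sqrt2_inv_c]
        linear_combination (((ω0:ℂ)/2 - (ω0:ℂ)^3/2 + (ω0:ℂ)*(2*(ω0:ℂ)^2-1)/4) *
            ((Real.pi ^ (-(1 : ℝ)/4) : ℝ) : ℂ) * Complex.exp (-(ω0:ℂ) ^ 2 / 2)) * sqrt2_sq_c +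
          ((1 - (ω0:ℂ)^2) * (ω0:ℂ) * ((Real.pi ^ (-(1 : ℝ)/4) : ℝ) : ℂ) *
            ((Real.sqrt 2 : ℝ) : ℂ) * Complex.exp (-(ω0:ℂ) ^ 2 / 2)) * Complex.I_sq +
          (-(ω0:ℂ)/4 * ((Real.pi ^ (-(1 : ℝ)/4) : ℝ) : ℂ) * Complex.exp (-(ω0:ℂ) ^ 2 / 2)) * sqrt2_sq_c)
      (by
        unfold phi0 phi1 phi2
        push_cast
        rw [sqrt2_inv_c]
        linear_combination (((ω0:ℂ)/2 - (ω0:ℂ)*(ω1:ℂ)^2/2 + (ω0:ℂ)*(2*(ω1:ℂ)^2-1)/4) *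
            ((Real.pi ^ (-(1 : ℝ)/4) : ℝ) : ℂ) * Complex.exp (-(ω1:ℂ) ^ 2 / 2)) * sqrt2_sq_c +
          ((1 - (ω0:ℂ)^2) * (ω1:ℂ) * ((Real.pi ^ (-(1 : ℝ)/4) : ℝ) : ℂ) *
            ((Real.sqrt 2 : ℝ) : ℂ) * Complex.exp (-(ω1:ℂ) ^ 2 / 2)) * Complex.I_sq +
          (-(ω0:ℂ)/4 * ((Real.pi ^ (-(1 : ℝ)/4) : ℝ) : ℂ) * Complex.exp (-(ω1:ℂ) ^ 2 / 2)) * sqrt2_sq_c +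
          (((ω0:ℂ) - (ω1:ℂ)) * ((Real.sqrt 2 : ℝ) : ℂ) * ((Real.pi ^ (-(1 : ℝ)/4) : ℝ) : ℂ) *
            Complex.exp (-(ω1:ℂ) ^ 2 / 2)) * hpc)
    exact hω0 (by exact_mod_cast this.2.2)
  · intro hne a0 a1 a2 h0 h1 h2
    have Z := key0 a0 a1 a2 h0
    have K0 := keyω a0 a1 a2 ω0 h1
    have K1 := keyω a0 a1 a2 ω1 h2
    have E0 : a2 * (1 - (ω0:ℂ)^2) - Complex.I * a1 * (ω0:ℂ) = 0 := by
      linear_combination (K0 - Z) / 2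
    have E1 : a2 * (1 - (ω1:ℂ)^2) - Complex.I * a1 * (ω1:ℂ) = 0 := by
      linear_combination (K1 - Z) / 2
    have hd : a2 * (((ω1:ℂ) - (ω0:ℂ)) * (1 + (ω0:ℂ)*(ω1:ℂ))) = 0 := by
      linear_combination (ω1:ℂ) * E0 - (ω0:ℂ) * E1
    have hδ : ((ω1:ℂ) - (ω0:ℂ)) ≠ 0 := by
      rw [sub_ne_zero]
      exact_mod_cast (Ne.symm hω)
    have hv : (1 + (ω0:ℂ)*(ω1:ℂ)) ≠ 0 := by
      intro h
      apply hne
      have : (ω0:ℂ) * (ω1:ℂ) = -1 := by linear_combination h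
      exact_mod_cast this
    have ha2 : a2 = 0 := by
      rcases mul_eq_zero.mp hd with h | h
      · exact h
      · exact absurd h (mul_ne_zero hδ hv)
    have ha1 : a1 = 0 := by
      rcases ne_or_eq ω0 0 with h | h
      · have : Complex.I * a1 * (ω0:ℂ) = 0 := by linear_combination -E0 + (1 - (ω0:ℂ)^2) * ha2
        have := mul_eq_zero.mp this
        rcases this with h' | h'
        · rcases mul_eq_zero.mp h' with h'' | h''
          · exact absurd h'' Complex.I_ne_zero
          · exact h''
        · exact absurd h' (Complex.ofReal_ne_zero.mpr h)
      · have hω1 : ω1 ≠ 0 := by rw [h] at hω; exact (Ne.symm hω)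
        have : Complex.I * a1 * (ω1:ℂ) = 0 := by linear_combination -E1 + (1 - (ω1:ℂ)^2) * ha2
        rcases mul_eq_zero.mp this with h' | h'
        · rcases mul_eq_zero.mp h' with h'' | h''
          · exact absurd h'' Complex.I_ne_zero
          · exact h''
        · exact absurd h' (Complex.ofReal_ne_zero.mpr hω1)
    have ha0 : a0 = 0 := by
      have : a0 * ((Real.sqrt 2 : ℝ) : ℂ) = 0 := by linear_combination Z + ha2
      rcases mul_eq_zero.mp this with h | h
      · exact h
      · exact absurd h sqrt2_ne_c
    exact ⟨ha0, ha1, ha2⟩
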